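/- arXiv:2003.07582 — 6 statements merged into one kernel-verified Lean document; each statement's English description precedes it below -/
import Mathlib

section
/- Let κ be a regular uncountable cardinal and ⟨C_α | α<κ⟩ a C-sequence over κ. For every pair (α,β)∈[κ]² with α>0: (1) λ(last(α,β),β)<α (using the convention λ(δ,δ)=0); (2) if last(α,β)≠α, then α∈acc(C_{last(α,β)}); (3) tr(last(α,β),β) is an initial segment of tr(α,β). -/
/-!
Write `t_j = Tr(α,β)(j)`. Each step `t_{j+1} = min (C_{t_j} \ α)` leaves no point of `C_{t_j}`
in `[α, t_{j+1})`. So if `sup (C_{t_j} ∩ α) = α`, closedness puts `α` in `C_{t_j}` and the walk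
stops at the next step; hence `λ(α,β) = α` can only be witnessed by the last step
`i = ρ₂(α,β) - 1`, and then `last(α,β) = t_i`. Walking from `β` down to `t_i` instead of `α`
makes the same moves, and `C_{t_j} ∩ t_i = C_{t_j} ∩ α` for `j < i`, so `λ(t_i,β)` is a maximum
of suprema that are all `< α`.
-/

namespace Paper

open Cardinal Set

/-- `α` is an accumulation point of `C`: `sup(C ∩ α) = α > 0`. -/
def IsAccPt (C : Set Ordinal) (α : Ordinal) : Prop :=
  0 < α ∧ ∀ β < α, ∃ γ ∈ C, β < γ ∧ γ < α

/-- `C` is a club in `δ`: a closed and unbounded subset of `δ`. -/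
def IsClubIn (C : Set Ordinal) (δ : Ordinal) : Prop :=
  C ⊆ Set.Iio δ ∧ (∀ α < δ, IsAccPt C α → α ∈ C) ∧ ∀ β < δ, ∃ γ ∈ C, β < γ

/-- `S` is stationary in `δ`: it meets every club in `δ`. -/
def IsStationaryIn (S : Set Ordinal) (δ : Ordinal) : Prop :=
  ∀ C, IsClubIn C δ → (S ∩ C).Nonempty

/-- `X` has cardinality `κ`. -/
def HasSize {α : Type 1} (X : Set α) (κ : Cardinal.{0}) : Prop :=
  #X = Cardinal.lift.{1} κ

/-- A `C`-sequence over `κ`: each `C α` is a closed subset of `α` with `sup(C α) = sup(α)`. -/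
def IsCSeq (κ : Ordinal) (C : Ordinal → Set Ordinal) : Prop :=
  ∀ α < κ, C α ⊆ Set.Iio α ∧ (∀ β < α, IsAccPt (C α) β → β ∈ C α) ∧
    sSup (C α) = sSup (Set.Iio α)

/-- The trace function `Tr(α,β) : ω → κ` of walks along `C`. -/
noncomputable def Trn (C : Ordinal → Set Ordinal) (α β : Ordinal) : ℕ → Ordinal
  | 0 => β
  | n + 1 => if α < Trn C α β n then sInf (C (Trn C α β n) \ Set.Iio α) else α

/-- `ρ₂(α,β)`: the length of the walk from `β` down to `α`. -/
noncomputable def rho2 (C : Ordinal → Set Ordinal) (α β : Ordinal) : ℕ :=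
  sInf {n : ℕ | Trn C α β n = α}

/-- The image of `tr(α,β) = Tr(α,β) ↾ ρ₂(α,β)`. -/
noncomputable def trIm (C : Ordinal → Set Ordinal) (α β : Ordinal) : Set Ordinal :=
  {x | ∃ i < rho2 C α β, Trn C α β i = x}

/-- `λ(α,β) = max { sup(C_{Tr(α,β)(i)} ∩ α) | i < ρ₂(α,β) }`, with the convention `λ(δ,δ) = 0`. -/
noncomputable def lamb (C : Ordinal → Set Ordinal) (α β : Ordinal) : Ordinal :=
  (Finset.range (rho2 C α β)).sup fun i => sSup (C (Trn C α β i) ∩ Set.Iio α)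

/-- `last(α,β)` of Definition 2.9. -/
noncomputable def lastStep (C : Ordinal → Set Ordinal) (α β : Ordinal) : Ordinal :=
  if lamb C α β < α then α else sInf (trIm C α β)

variable {κ : Ordinal} {C : Ordinal → Set Ordinal}

lemma diff_Iio_eq_of_le_sInf {S : Set Ordinal} {α η : Ordinal} (hαη : α ≤ η)
    (hη : η ≤ sInf (S \ Iio α)) : S \ Iio η = S \ Iio α := by
  ext x
  simp only [mem_sdiff, mem_Iio, not_lt, and_congr_right_iff]
  exact fun hx => ⟨hαη.trans, fun hαx => hη.trans (csInf_le' ⟨hx, not_lt.2 hαx⟩)⟩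

lemma inter_Iio_eq_of_le_sInf {S : Set Ordinal} {α η : Ordinal} (hαη : α ≤ η)
    (hη : η ≤ sInf (S \ Iio α)) : S ∩ Iio η = S ∩ Iio α := by
  rw [← sdiff_sdiff_right_self, diff_Iio_eq_of_le_sInf hαη hη, sdiff_sdiff_right_self]

lemma sSup_inter_Iio_le (S : Set Ordinal) (α : Ordinal) : sSup (S ∩ Iio α) ≤ α :=
  csSup_le' fun _ hx => hx.2.le

lemma isAccPt_of_sSup_inter_Iio_eq {S : Set Ordinal} {α : Ordinal} (hα : 0 < α)
    (hsup : sSup (S ∩ Iio α) = α) : IsAccPt S α := by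
  have hne : (S ∩ Iio α).Nonempty := by
    by_contra h
    rw [not_nonempty_iff_eq_empty.1 h, csSup_empty] at hsup
    exact hα.ne hsup
  refine ⟨hα, fun b hb => ?_⟩
  obtain ⟨γ, ⟨hγS, hγα⟩, hbγ⟩ := exists_lt_of_lt_csSup hne (hsup ▸ hb)
  exact ⟨γ, hγS, hbγ, hγα⟩

lemma rho2_eq_of_Trn_eq {α β : Ordinal} {n : ℕ} (hn : Trn C α β n = α)
    (hlt : ∀ j < n, Trn C α β j ≠ α) : rho2 C α β = n :=
  le_antisymm (Nat.sInf_le hn)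
    (not_lt.1 fun h => hlt _ h (Nat.sInf_mem (s := {n | Trn C α β n = α}) ⟨n, hn⟩))

lemma Trn_succ_of_lt {α β : Ordinal} {n : ℕ} (h : α < Trn C α β n) :
    Trn C α β (n + 1) = sInf (C (Trn C α β n) \ Iio α) := if_pos h

section CSeq

variable (hC : IsCSeq κ C)
include hC

lemma mem_of_sSup_inter_Iio_eq {α δ : Ordinal} (hα : 0 < α) (hαδ : α < δ) (hδ : δ < κ)
    (hsup : sSup (C δ ∩ Iio α) = α) : α ∈ C δ :=
  (hC δ hδ).2.1 α hαδ (isAccPt_of_sSup_inter_Iio_eq hα hsup)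

lemma nonempty_diff_Iio {α δ : Ordinal} (hα : 0 < α) (hαδ : α < δ) (hδ : δ < κ) :
    (C δ \ Iio α).Nonempty := by
  by_contra h
  have hbdd : ∀ γ ∈ C δ, γ < α := fun γ hγ => not_le.1 fun hαγ => h ⟨γ, hγ, not_lt.2 hαγ⟩
  have hsup : sSup (C δ ∩ Iio α) = α := by
    rw [inter_eq_left.2 (show C δ ⊆ Iio α from hbdd)]
    refine le_antisymm (csSup_le' fun γ hγ => (hbdd γ hγ).le) ?_
    rw [(hC δ hδ).2.2]
    exact le_csSup bddAbove_Iio hαδ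
  exact h ⟨α, mem_of_sSup_inter_Iio_eq hC hα hαδ hδ hsup, lt_irrefl α⟩

lemma sInf_diff_Iio_mem {α δ : Ordinal} (hα : 0 < α) (hαδ : α < δ) (hδ : δ < κ) :
    sInf (C δ \ Iio α) ∈ C δ \ Iio α :=
  csInf_mem (nonempty_diff_Iio hC hα hαδ hδ)

lemma sInf_diff_Iio_lt {α δ : Ordinal} (hα : 0 < α) (hαδ : α < δ) (hδ : δ < κ) :
    sInf (C δ \ Iio α) < δ :=
  (hC δ hδ).1 (sInf_diff_Iio_mem hC hα hαδ hδ).1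

variable {α β : Ordinal} (hα : 0 < α) (hαβ : α ≤ β) (hβ : β < κ)
include hα hαβ hβ

lemma Trn_mem_Ico (n : ℕ) : Trn C α β n ∈ Ico α κ := by
  induction n with
  | zero => exact ⟨hαβ, hβ⟩
  | succ n ih =>
    by_cases h : α < Trn C α β n
    · rw [Trn_succ_of_lt h]
      exact ⟨not_lt.1 (sInf_diff_Iio_mem hC hα h ih.2).2,
        (sInf_diff_Iio_lt hC hα h ih.2).trans ih.2⟩
    · rw [Trn, if_neg h]
      exact ⟨le_rfl, hαβ.trans_lt hβ⟩

lemma Trn_succ_lt {n : ℕ} (h : α < Trn C α β n) : Trn C α β (n + 1) < Trn C α β n := by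
  rw [Trn_succ_of_lt h]
  exact sInf_diff_Iio_lt hC hα h (Trn_mem_Ico hC hα hαβ hβ n).2

lemma lt_Trn_of_lt_rho2 {j : ℕ} (hj : j < rho2 C α β) : α < Trn C α β j :=
  (Trn_mem_Ico hC hα hαβ hβ j).1.lt_of_ne (Ne.symm (Nat.notMem_of_lt_sInf hj))

lemma Trn_strictAntiOn : StrictAntiOn (Trn C α β) (Iic (rho2 C α β)) :=
  strictAntiOn_Iic_of_succ_lt fun _ hm =>
    Trn_succ_lt hC hα hαβ hβ (lt_Trn_of_lt_rho2 hC hα hαβ hβ hm)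

lemma Trn_Trn_eq {i : ℕ} (hi : i ≤ rho2 C α β) :
    ∀ j ≤ i, Trn C (Trn C α β i) β j = Trn C α β j := by
  have hanti := Trn_strictAntiOn hC hα hαβ hβ
  intro j
  induction j with
  | zero => exact fun _ => rfl
  | succ j ih =>
    intro hji
    have hαj := lt_Trn_of_lt_rho2 hC hα hαβ hβ (by omega : j < rho2 C α β)
    have hij : Trn C α β i < Trn C α β j :=
      hanti (mem_Iic.2 (by omega)) (mem_Iic.2 hi) (by omega)
    have hi_le : Trn C α β i ≤ Trn C α β (j + 1) :=
      hanti.antitoneOn (mem_Iic.2 (by omega)) (mem_Iic.2 hi) hji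
    rw [Trn_succ_of_lt hαj] at hi_le ⊢
    rw [Trn_succ_of_lt (ih (by omega) ▸ hij), ih (by omega),
      diff_Iio_eq_of_le_sInf (Trn_mem_Ico hC hα hαβ hβ i).1 hi_le]

lemma rho2_Trn {i : ℕ} (hi : i ≤ rho2 C α β) : rho2 C (Trn C α β i) β = i := by
  refine rho2_eq_of_Trn_eq (Trn_Trn_eq hC hα hαβ hβ hi i le_rfl) fun j hj => ?_
  rw [Trn_Trn_eq hC hα hαβ hβ hi j hj.le]
  exact (Trn_strictAntiOn hC hα hαβ hβ (mem_Iic.2 (by omega)) (mem_Iic.2 hi) hj).ne'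

lemma Trn_succ_eq_of_sSup_inter_Iio_eq {j : ℕ} (hj : j < rho2 C α β)
    (hsup : sSup (C (Trn C α β j) ∩ Iio α) = α) : Trn C α β (j + 1) = α := by
  have hαj := lt_Trn_of_lt_rho2 hC hα hαβ hβ hj
  have hmem := mem_of_sSup_inter_Iio_eq hC hα hαj (Trn_mem_Ico hC hα hαβ hβ j).2 hsup
  rw [Trn_succ_of_lt hαj]
  exact le_antisymm (csInf_le' ⟨hmem, lt_irrefl α⟩) (le_csInf ⟨α, hmem, lt_irrefl α⟩
    fun _ hx => not_lt.1 hx.2)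

lemma sSup_inter_Iio_lt {j : ℕ} (hj : j + 1 < rho2 C α β) :
    sSup (C (Trn C α β j) ∩ Iio α) < α :=
  (sSup_inter_Iio_le _ α).lt_of_ne fun hsup =>
    (lt_Trn_of_lt_rho2 hC hα hαβ hβ hj).ne'
      (Trn_succ_eq_of_sSup_inter_Iio_eq hC hα hαβ hβ (by omega) hsup)

lemma lamb_Trn_lt {i : ℕ} (hi : rho2 C α β = i + 1) : lamb C (Trn C α β i) β < α := by
  rw [lamb, Finset.sup_lt_iff (bot_eq_zero (α := Ordinal) ▸ hα),
    rho2_Trn hC hα hαβ hβ (by omega)]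
  intro j hj
  have hj : j < i := Finset.mem_range.1 hj
  have hle : Trn C α β i ≤ sInf (C (Trn C α β j) \ Iio α) := by
    rw [← Trn_succ_of_lt (lt_Trn_of_lt_rho2 hC hα hαβ hβ (by omega))]
    exact (Trn_strictAntiOn hC hα hαβ hβ).antitoneOn (mem_Iic.2 (by omega))
      (mem_Iic.2 (by omega)) hj
  rw [Trn_Trn_eq hC hα hαβ hβ (by omega) j hj.le,
    inter_Iio_eq_of_le_sInf (Trn_mem_Ico hC hα hαβ hβ i).1 hle]
  exact sSup_inter_Iio_lt hC hα hαβ hβ (by omega)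

lemma lastStep_of_not_lamb_lt (h : ¬lamb C α β < α) :
    ∃ i, rho2 C α β = i + 1 ∧ lastStep C α β = Trn C α β i ∧
      α ∈ C (Trn C α β i) ∧ IsAccPt (C (Trn C α β i)) α := by
  obtain ⟨i, hi, hge⟩ : ∃ i ∈ Finset.range (rho2 C α β),
      ¬sSup (C (Trn C α β i) ∩ Iio α) < α := by
    simpa only [lamb, Finset.sup_lt_iff (bot_eq_zero (α := Ordinal) ▸ hα), not_forall,
      exists_prop] using h
  have hi : i < rho2 C α β := Finset.mem_range.1 hi
  have hsup := le_antisymm (sSup_inter_Iio_le _ α) (not_lt.1 hge)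
  have hρ : rho2 C α β = i + 1 :=
    rho2_eq_of_Trn_eq (Trn_succ_eq_of_sSup_inter_Iio_eq hC hα hαβ hβ hi hsup) fun j hj =>
      (lt_Trn_of_lt_rho2 hC hα hαβ hβ (by omega)).ne'
  have hleast : IsLeast (trIm C α β) (Trn C α β i) := by
    refine ⟨⟨i, hi, rfl⟩, ?_⟩
    rintro _ ⟨j, hj, rfl⟩
    exact (Trn_strictAntiOn hC hα hαβ hβ).antitoneOn (mem_Iic.2 (by omega)) (mem_Iic.2 hi.le)
      (by omega)
  refine ⟨i, hρ, by rw [lastStep, if_neg h, hleast.csInf_eq], ?_,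
    isAccPt_of_sSup_inter_Iio_eq hα hsup⟩
  exact mem_of_sSup_inter_Iio_eq hC hα (lt_Trn_of_lt_rho2 hC hα hαβ hβ hi)
    (Trn_mem_Ico hC hα hαβ hβ i).2 hsup

end CSeq

theorem stmt6_general (κ : Cardinal)
    (C : Ordinal → Set Ordinal) (hC : IsCSeq κ.ord C) :
    ∀ α β : Ordinal, 0 < α → α < β → β < κ.ord →
      lamb C (lastStep C α β) β < α ∧
      (lastStep C α β ≠ α →
        α ∈ C (lastStep C α β) ∧ IsAccPt (C (lastStep C α β)) α) ∧
      (rho2 C (lastStep C α β) β ≤ rho2 C α β ∧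
        ∀ i < rho2 C (lastStep C α β) β, Trn C (lastStep C α β) β i = Trn C α β i) := by
  intro α β hα hαβ hβ
  by_cases h : lamb C α β < α
  · rw [lastStep, if_pos h]
    exact ⟨h, fun hne => (hne rfl).elim, le_rfl, fun _ _ => rfl⟩
  obtain ⟨i, hρ, hlast, hmem, hacc⟩ := lastStep_of_not_lamb_lt hC hα hαβ.le hβ h
  have hρi : rho2 C (Trn C α β i) β = i := rho2_Trn hC hα hαβ.le hβ (by omega)
  rw [hlast, hρi]
  exact ⟨lamb_Trn_lt hC hα hαβ.le hβ hρ, fun _ => ⟨hmem, hacc⟩, by omega,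
    fun j hj => Trn_Trn_eq hC hα hαβ.le hβ (by omega) j hj.le⟩

/-- Lemma 2.10: for every `(α,β) ∈ [κ]²` with `α > 0`:
(1) `λ(last(α,β), β) < α`;
(2) if `last(α,β) ≠ α` then `α ∈ acc(C_{last(α,β)})`;
(3) `tr(last(α,β), β)` is an initial segment of `tr(α,β)`. -/
theorem stmt6 (κ : Cardinal) (hreg : κ.IsRegular) (hunc : ℵ₀ < κ)
    (C : Ordinal → Set Ordinal) (hC : IsCSeq κ.ord C) :
    ∀ α β : Ordinal, 0 < α → α < β → β < κ.ord →
      lamb C (lastStep C α β) β < α ∧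
      (lastStep C α β ≠ α →
        α ∈ C (lastStep C α β) ∧ IsAccPt (C (lastStep C α β)) α) ∧
      (rho2 C (lastStep C α β) β ≤ rho2 C α β ∧
        ∀ i < rho2 C (lastStep C α β) β, Trn C (lastStep C α β) β i = Trn C α β i) :=
  stmt6_general κ C hC

end Paper
end

section
/- Let κ be a regular uncountable cardinal. If Pl1(κ,1,2) holds, then there exists a function s:[κ]²→κ satisfying: (1) for every pair (α,β)∈[κ]² with β a limit ordinal, α<s(α,β)<β; (2) for every cofinal A⊆κ, the image s"[A]² is stationary in κ. -/
namespace Paper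

open Cardinal Set

/-- `Pl₁(κ, θ, χ)` of Definition 1.3 (the triple version). -/
def Pl1 (κ θ χ : Cardinal) : Prop :=
  ∃ t : Ordinal → Ordinal → Ordinal × Ordinal × Ordinal,
    (∀ α β : Ordinal, α < β → β < κ.ord →
      (t α β).1 ≤ (t α β).2.1 ∧ (t α β).2.1 ≤ α ∧ α < (t α β).2.2 ∧ (t α β).2.2 ≤ β) ∧
    ∀ σ : Ordinal, σ < χ.ord →
      ∀ 𝒜 : Set (Set Ordinal),
        (∀ a ∈ 𝒜, a ⊆ Set.Iio κ.ord ∧ Nonempty (↥(Set.Iio σ) ≃o ↥a)) →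
        𝒜.PairwiseDisjoint id →
        HasSize 𝒜 κ →
        ∃ S ⊆ Set.Iio κ.ord, IsStationaryIn S κ.ord ∧
          ∀ α' ∈ S, ∀ β' ∈ S, α' < β' →
            ∀ τ : Ordinal, τ < min θ.ord α' →
              ∃ a ∈ 𝒜, ∃ b ∈ 𝒜, (∀ x ∈ a, ∀ y ∈ b, x < y) ∧
                Set.image2 (fun x y => t x y) a b = {(τ, α', β')}

/-! Let `t` witness `Pl₁(κ,1,2)` and let `s(α,β)` be the third coordinate `β*` of `t(α,β)` when
`β* < β`, and `α + 1` otherwise. Given a cofinal `A ⊆ κ`, feed the singletons of the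
non-accumulation points of `A` to `Pl₁`: this yields a stationary `S` such that every `β' ∈ S`
lying above a positive element of `S` is `β*` for some `x < y` among those points. When `β'` is
in addition an accumulation point of `A` it cannot be `y`, so `β' < y` and `s(x,y) = β'`. As the
accumulation points of `A`, and those of any club `D`, form clubs, `s"[A]²` meets every club. -/

open Ordinal

section

variable {κ : Cardinal.{0}}

def closurePoints (g : Ordinal → Ordinal) (δ : Ordinal) : Set Ordinal :=
  {ε | 0 < ε ∧ ε < δ ∧ ∀ γ < ε, g γ < ε}

lemma closurePoints_anti {g h : Ordinal → Ordinal} (hgh : ∀ γ, g γ ≤ h γ) (δ : Ordinal) :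
    closurePoints h δ ⊆ closurePoints g δ :=
  fun _ ⟨hpos, hlt, hcl⟩ => ⟨hpos, hlt, fun γ hγ => (hgh γ).trans_lt (hcl γ hγ)⟩

lemma sSup_lt_ord_of_mk_lt (hreg : κ.IsRegular) {X : Set Ordinal} (hX : X ⊆ Iio κ.ord)
    (hlt : #X < Cardinal.lift.{1} κ) : sSup X < κ.ord :=
  sSup_lt_of_lt_cof (by rwa [← lift_cof, hreg.cof_ord]) fun _ hx => hX hx

-- The closure point is reached by iterating `x ↦ sup (g '' x) + 1` ω times.
lemma exists_mem_closurePoints_gt (hreg : κ.IsRegular) (hunc : ℵ₀ < κ) {g : Ordinal → Ordinal}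
    (hg : ∀ γ < κ.ord, g γ < κ.ord) {β : Ordinal} (hβ : β < κ.ord) :
    ∃ ε ∈ closurePoints g κ.ord, β < ε := by
  let h : Ordinal → Ordinal := fun x => Order.succ (sSup (g '' Iio x))
  have hh : ∀ x < κ.ord, h x < κ.ord := by
    intro x hx
    refine (Cardinal.isSuccLimit_ord hunc.le).succ_lt (sSup_lt_ord_of_mk_lt hreg ?_ ?_)
    · rintro _ ⟨γ, hγ, rfl⟩
      exact hg γ (mem_Iio.1 hγ |>.trans hx)
    · calc #(g '' Iio x) ≤ #(Iio x) := mk_image_le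
        _ = Cardinal.lift.{1} x.card := Cardinal.mk_Iio_ordinal x
        _ < Cardinal.lift.{1} κ := Cardinal.lift_lt.2 (Cardinal.lt_ord.1 hx)
  have hgh : ∀ x, ∀ γ < x, g γ < h x := fun x γ hγ =>
    (le_csSup Ordinal.bddAbove_of_small (mem_image_of_mem g (mem_Iio.2 hγ))).trans_lt
      (Order.lt_succ _)
  have hβε : β < nfp h (Order.succ β) := (Order.lt_succ β).trans_le (le_nfp h _)
  refine ⟨nfp h (Order.succ β), ⟨pos_of_gt hβε,
    nfp_lt_ord_of_isRegular hreg hunc.ne' hh ((Cardinal.isSuccLimit_ord hunc.le).succ_lt hβ),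
    fun γ hγ => ?_⟩, hβε⟩
  obtain ⟨n, hn⟩ := lt_nfp_iff.1 hγ
  calc g γ < h (h^[n] (Order.succ β)) := hgh _ γ hn
    _ = h^[n + 1] (Order.succ β) := (Function.iterate_succ_apply' h n _).symm
    _ ≤ nfp h (Order.succ β) := iterate_le_nfp h _ (n + 1)

lemma isClubIn_closurePoints (hreg : κ.IsRegular) (hunc : ℵ₀ < κ) {g : Ordinal → Ordinal}
    (hg : ∀ γ < κ.ord, g γ < κ.ord) : IsClubIn (closurePoints g κ.ord) κ.ord := by
  refine ⟨fun ε hε => hε.2.1, fun α hα ⟨hpos, hacc⟩ => ⟨hpos, hα, fun γ hγ => ?_⟩,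
    fun β hβ => exists_mem_closurePoints_gt hreg hunc hg hβ⟩
  obtain ⟨ε, hε, hγε, hεα⟩ := hacc γ hγ
  exact (hε.2.2 γ hγε).trans hεα

/-- Junk value `0` when `C` has no element above `x`. -/
noncomputable def nextIn (C : Set Ordinal) (x : Ordinal) : Ordinal :=
  sInf {c | c ∈ C ∧ x < c}

lemma nextIn_mem {C : Set Ordinal} {x : Ordinal} (h : ∃ c ∈ C, x < c) :
    nextIn C x ∈ C ∧ x < nextIn C x :=
  csInf_mem h

lemma nextIn_lt {C : Set Ordinal} {δ x : Ordinal} (hC : C ⊆ Iio δ)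
    (hcof : ∀ β < δ, ∃ γ ∈ C, β < γ) (hx : x < δ) : nextIn C x < δ :=
  hC (nextIn_mem (hcof x hx)).1

lemma nextIn_notMem_closurePoints {C : Set Ordinal} {x : Ordinal} (h : ∃ c ∈ C, x < c)
    (δ : Ordinal) : nextIn C x ∉ closurePoints (nextIn C) δ :=
  fun ⟨_, _, hcl⟩ => (hcl x (nextIn_mem h).2).false

lemma IsClubIn.closurePoints_nextIn_subset {C : Set Ordinal} {δ : Ordinal} (hC : IsClubIn C δ) :
    closurePoints (nextIn C) δ ⊆ C := by
  rintro α ⟨hpos, hα, hcl⟩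
  refine hC.2.1 α hα ⟨hpos, fun γ hγ => ?_⟩
  obtain ⟨hmem, hgt⟩ := nextIn_mem (hC.2.2 γ (hγ.trans hα))
  exact ⟨nextIn C γ, hmem, hgt, hcl γ hγ⟩

lemma mk_eq_lift_of_unbounded (hreg : κ.IsRegular) {X : Set Ordinal} (hX : X ⊆ Iio κ.ord)
    (hcof : ∀ β < κ.ord, ∃ x ∈ X, β < x) : #X = Cardinal.lift.{1} κ := by
  refine le_antisymm ?_ (not_lt.1 fun hlt => ?_)
  · calc #X ≤ #(Iio κ.ord) := mk_le_mk_of_subset hX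
      _ = Cardinal.lift.{1} κ := by rw [Cardinal.mk_Iio_ordinal, card_ord]
  · obtain ⟨x, hx, hsupx⟩ := hcof _ (sSup_lt_ord_of_mk_lt hreg hX hlt)
    exact hsupx.not_ge (le_csSup ⟨κ.ord, fun y hy => (hX hy).le⟩ hx)

/-- `Pl₁(κ,1,2)` applied to families of singletons, keeping only the coordinate `β*`. -/
lemma Pl1.exists_upper_coloring (hreg : κ.IsRegular) (hPl : Pl1 κ 1 2) :
    ∃ u : Ordinal → Ordinal → Ordinal,
      (∀ α β, α < β → β < κ.ord → α < u α β ∧ u α β ≤ β) ∧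
      ∀ X ⊆ Iio κ.ord, (∀ β < κ.ord, ∃ x ∈ X, β < x) →
        ∃ S, IsStationaryIn S κ.ord ∧ ∀ α' ∈ S, ∀ β' ∈ S, 0 < α' → α' < β' →
          ∃ x ∈ X, ∃ y ∈ X, x < y ∧ u x y = β' := by
  obtain ⟨t, hbounds, hcolor⟩ := hPl
  refine ⟨fun α β => (t α β).2.2, fun α β hαβ hβ => (hbounds α β hαβ hβ).2.2,
    fun X hX hcof => ?_⟩
  obtain ⟨S, -, hS, hhit⟩ := hcolor 1 (by simp) ((fun x => {x}) '' X)
    (by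
      rintro _ ⟨x, hx, rfl⟩
      exact ⟨singleton_subset_iff.2 (hX hx), ⟨OrderIso.ofUnique _ _⟩⟩)
    (by
      rintro _ ⟨x, -, rfl⟩ _ ⟨y, -, rfl⟩ hne
      exact disjoint_singleton.2 fun hxy => hne (hxy ▸ rfl))
    (by rw [HasSize, mk_image_eq singleton_injective, mk_eq_lift_of_unbounded hreg hX hcof])
  refine ⟨S, hS, fun α' hα' β' hβ' hpos hαβ => ?_⟩
  obtain ⟨_, ⟨x, hx, rfl⟩, _, ⟨y, hy, rfl⟩, hxy, himg⟩ :=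
    hhit α' hα' β' hβ' hαβ 0 (lt_min (by simp) hpos)
  rw [image2_singleton] at himg
  exact ⟨x, hx, y, hy, hxy x rfl y rfl, congrArg (·.2.2) (singleton_eq_singleton_iff.1 himg)⟩

lemma exists_value_lt_mem_club (hreg : κ.IsRegular) (hunc : ℵ₀ < κ)
    {u : Ordinal → Ordinal → Ordinal} (hu : ∀ α β, α < β → β < κ.ord → u α β ≤ β)
    (hhit : ∀ X ⊆ Iio κ.ord, (∀ β < κ.ord, ∃ x ∈ X, β < x) →
      ∃ S, IsStationaryIn S κ.ord ∧ ∀ α' ∈ S, ∀ β' ∈ S, 0 < α' → α' < β' →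
        ∃ x ∈ X, ∃ y ∈ X, x < y ∧ u x y = β')
    {A : Set Ordinal} (hA : A ⊆ Iio κ.ord) (hAcof : ∀ β < κ.ord, ∃ γ ∈ A, β < γ)
    {D : Set Ordinal} (hD : IsClubIn D κ.ord) :
    ∃ x ∈ A, ∃ y ∈ A, x < y ∧ u x y < y ∧ u x y ∈ D := by
  set accA := closurePoints (nextIn A) κ.ord
  have hnextA : ∀ γ < κ.ord, nextIn A γ < κ.ord := fun γ => nextIn_lt hA hAcof
  have hcof : ∀ β < κ.ord, ∃ y ∈ A \ accA, β < y := fun β hβ =>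
    ⟨nextIn A β, ⟨(nextIn_mem (hAcof β hβ)).1, nextIn_notMem_closurePoints (hAcof β hβ) _⟩,
      (nextIn_mem (hAcof β hβ)).2⟩
  obtain ⟨S, hS, hSX⟩ := hhit (A \ accA) (sdiff_subset.trans hA) hcof
  obtain ⟨p, hpS, hp⟩ := hS _ (isClubIn_closurePoints hreg hunc hnextA)
  let g : Ordinal → Ordinal := fun γ => max (max (nextIn D γ) (nextIn A γ)) p
  have hg : ∀ γ < κ.ord, g γ < κ.ord := fun γ hγ =>
    max_lt (max_lt (nextIn_lt hD.1 hD.2.2 hγ) (hnextA γ hγ)) hp.2.1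
  obtain ⟨β', hβ'S, hβ'⟩ := hS _ (isClubIn_closurePoints hreg hunc hg)
  have hpβ' : p < β' := (le_max_right _ _).trans_lt (hβ'.2.2 0 hβ'.1)
  obtain ⟨x, hx, y, hy, hxy, rfl⟩ := hSX p hpS β' hβ'S hp.1 hpβ'
  have hacc : u x y ∈ accA :=
    closurePoints_anti (fun γ => (le_max_right _ _).trans (le_max_left _ _)) _ hβ'
  refine ⟨x, hx.1, y, hy.1, hxy, (hu x y hxy (hA hy.1)).lt_of_ne fun h => hy.2 (h ▸ hacc), ?_⟩
  exact hD.closurePoints_nextIn_subset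
    (closurePoints_anti (fun γ => (le_max_left _ _).trans (le_max_left _ _)) _ hβ')

end

/-- The claim within Lemma 2.12: if `Pl₁(κ,1,2)` holds, then there is `s : [κ]² → κ` such that
(1) `α < s(α,β) < β` whenever `α < β < κ` with `β` a limit ordinal, and
(2) for every cofinal `A ⊆ κ`, the image `s``[A]²` is stationary in `κ`. -/
theorem stmt7 (κ : Cardinal) (hreg : κ.IsRegular) (hunc : ℵ₀ < κ)
    (hPl : Pl1 κ 1 2) :
    ∃ s : Ordinal → Ordinal → Ordinal,
      (∀ α β : Ordinal, α < β → β < κ.ord → Order.IsSuccLimit β →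
        α < s α β ∧ s α β < β) ∧
      ∀ A ⊆ Set.Iio κ.ord, (∀ β < κ.ord, ∃ γ ∈ A, β < γ) →
        IsStationaryIn {z : Ordinal | ∃ x ∈ A, ∃ y ∈ A, x < y ∧ s x y = z} κ.ord := by
  obtain ⟨u, hu, hhit⟩ := Pl1.exists_upper_coloring hreg hPl
  refine ⟨fun α β => if u α β < β then u α β else Order.succ α,
    fun α β hαβ hβ hlim => ?_, fun A hA hAcof D hD => ?_⟩
  · dsimp only
    split_ifs with h
    · exact ⟨(hu α β hαβ hβ).1, h⟩
    · exact ⟨Order.lt_succ α, hlim.succ_lt hαβ⟩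
  · obtain ⟨x, hx, y, hy, hxy, hlt, hmem⟩ := exists_value_lt_mem_club hreg hunc
      (fun α β hαβ hβ => (hu α β hαβ hβ).2) hhit hA hAcof hD
    exact ⟨u x y, ⟨x, hx, y, hy, hxy, if_pos hlt⟩, hmem⟩

end Paper
end

section
/- Let κ be a regular uncountable cardinal and θ,χ≤κ cardinals. If Pl1(κ,1,χ) holds and κ↛[stat]²_θ holds, then Pr1(κ,κ,θ,χ) holds. -/
/-! Compose the `κ ↛ [stat]²_θ` colouring `d` with the last two coordinates of the `Pl₁(κ,1,χ)`
map `t`: `c(α, β) = d(α*, β*)` where `t(α, β) = (τ*, α*, β*)`. Given a family `𝒜`, `Pl₁` yields a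
stationary `S` all of whose pairs `α* < β*` (with `α* > 0`, so that `τ* = 0` is allowed) are realised
as the constant value `(0, α*, β*)` of `t` on some `a × b`; choosing the pair inside `S \ {0}` with
`d(α*, β*) = i` makes `c` constantly `i` on `a × b`. -/

namespace Paper

open Cardinal Set

/-- Shelah's principle `Pr₁(κ, κ, θ, χ)`. -/
def Pr1 (κ θ χ : Cardinal) : Prop :=
  ∃ c : Ordinal → Ordinal → Ordinal,
    (∀ α β : Ordinal, α < β → β < κ.ord → c α β < θ.ord) ∧
    ∀ σ : Ordinal, σ < χ.ord →
      ∀ 𝒜 : Set (Set Ordinal),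
        (∀ a ∈ 𝒜, a ⊆ Set.Iio κ.ord ∧ Nonempty (↥(Set.Iio σ) ≃o ↥a)) →
        𝒜.PairwiseDisjoint id →
        HasSize 𝒜 κ →
        ∀ i : Ordinal, i < θ.ord →
          ∃ a ∈ 𝒜, ∃ b ∈ 𝒜, (∀ x ∈ a, ∀ y ∈ b, x < y) ∧
            Set.image2 (fun x y => c x y) a b = {i}

/-- `κ ↛ [stat]²_θ`: there is a coloring `c : [κ]² → θ` attaining every color on every
stationary subset of `κ`. -/
def NegStat (κ θ : Cardinal) : Prop :=
  ∃ c : Ordinal → Ordinal → Ordinal,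
    (∀ α β : Ordinal, α < β → β < κ.ord → c α β < θ.ord) ∧
    ∀ X ⊆ Set.Iio κ.ord, IsStationaryIn X κ.ord →
      ∀ τ < θ.ord, ∃ x ∈ X, ∃ y ∈ X, x < y ∧ c x y = τ

lemma IsClubIn.diff_zero {C : Set Ordinal} {δ : Ordinal} (hC : IsClubIn C δ) :
    IsClubIn (C \ {0}) δ := by
  obtain ⟨hCδ, hclosed, hunbdd⟩ := hC
  refine ⟨fun γ hγ => hCδ hγ.1, fun α hα hacc => ⟨hclosed α hα ⟨hacc.1, ?_⟩, hacc.1.ne'⟩, ?_⟩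
  · intro β hβ
    obtain ⟨γ, hγ, hβγ⟩ := hacc.2 β hβ
    exact ⟨γ, hγ.1, hβγ⟩
  · intro β hβ
    obtain ⟨γ, hγ, hβγ⟩ := hunbdd β hβ
    exact ⟨γ, ⟨hγ, (zero_le.trans_lt hβγ).ne'⟩, hβγ⟩

lemma IsStationaryIn.diff_zero {S : Set Ordinal} {δ : Ordinal} (hS : IsStationaryIn S δ) :
    IsStationaryIn (S \ {0}) δ := by
  intro C hC
  obtain ⟨x, hxS, hxC⟩ := hS (C \ {0}) hC.diff_zero
  exact ⟨x, ⟨hxS, hxC.2⟩, hxC.1⟩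

theorem stmt10_general (κ θ χ : Cardinal) (hPl : Pl1 κ 1 χ) (hstat : NegStat κ θ) :
    Pr1 κ θ χ := by
  obtain ⟨t, ht_le, ht_pl⟩ := hPl
  obtain ⟨d, hd_lt, hd_stat⟩ := hstat
  refine ⟨fun α β => d (t α β).2.1 (t α β).2.2, fun α β hαβ hβκ => ?_,
    fun σ hσ 𝒜 h𝒜 hdisj hsize i hi => ?_⟩
  · obtain ⟨-, hα, hαβ', hβ⟩ := ht_le α β hαβ hβκ
    exact hd_lt _ _ (hα.trans_lt hαβ') (hβ.trans_lt hβκ)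
  · obtain ⟨S, hSκ, hS, hS_pl⟩ := ht_pl σ hσ 𝒜 h𝒜 hdisj hsize
    obtain ⟨x, hx, y, hy, hxy, hdxy⟩ :=
      hd_stat (S \ {0}) (fun z hz => hSκ hz.1) hS.diff_zero i hi
    have h0 : (0 : Ordinal) < min (1 : Cardinal).ord x :=
      lt_min (by simp) (pos_iff_ne_zero.mpr hx.2)
    obtain ⟨a, ha, b, hb, hab, ht_const⟩ := hS_pl x hx.1 y hy.1 hxy 0 h0
    refine ⟨a, ha, b, hb, hab, ?_⟩
    rw [← image_image2 t (fun p => d p.2.1 p.2.2), ht_const, image_singleton, hdxy]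

/-- Lemma 2.14(2): if `Pl₁(κ,1,χ)` and `κ ↛ [stat]²_θ` hold, then `Pr₁(κ,κ,θ,χ)` holds. -/
theorem stmt10 (κ θ χ : Cardinal) (hreg : κ.IsRegular) (hunc : ℵ₀ < κ)
    (hθ : θ ≤ κ) (hχ : χ ≤ κ) (hPl : Pl1 κ 1 χ) (hstat : NegStat κ θ) :
    Pr1 κ θ χ :=
  stmt10_general κ θ χ hPl hstat

end Paper
end

section
/- Let κ be a regular uncountable cardinal and θ≤κ a cardinal. If Pl1(κ) holds, then the following are equivalent: (1) κ↛[κ]²_θ; (2) κ↛[κ;κ]²_θ; (3) Pr1(κ,κ,θ,ω). -/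
/-!
Composing a witness `c` of `κ ↛ [κ]²_θ` with the transformation `t` of `Pl₁(κ)` gives
`Pr₁(κ, κ, θ, ω)`: for a family `𝒜` of finite sets, `Pl₁` yields a stationary, hence unbounded
and so full-size, set `S`; it contains a pair `x < y` of the required colour, and `t` collapses
some `a × b` with `a < b` in `𝒜` onto `(x, y)`. Conversely, given `X` and `Y` of size `κ`,
choose by recursion `κ` many pairs `x_ξ < y_ξ` with `x_ξ ∈ X`, `y_ξ ∈ Y`, each lying above all
earlier ones; `Pr₁` for these two-element sets gives `a < b` in the family with `c` constantly `τ`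
on `a × b`, in particular at `(x_a, y_b)`. The rectangular principle trivially implies the
square one.
-/

namespace Paper

open Cardinal Set

/-- `Pl₁(κ)` of Definition 1.1 (the pair version). -/
def Pl1Two (κ : Cardinal) : Prop :=
  ∃ t : Ordinal → Ordinal → Ordinal × Ordinal,
    (∀ α β : Ordinal, α < β → β < κ.ord →
      (t α β).1 ≤ α ∧ α < (t α β).2 ∧ (t α β).2 ≤ β) ∧
    ∀ 𝒜 : Set (Set Ordinal),
      (∀ a ∈ 𝒜, a.Finite ∧ a ⊆ Set.Iio κ.ord) →
      𝒜.PairwiseDisjoint id →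
      HasSize 𝒜 κ →
      ∃ S ⊆ Set.Iio κ.ord, IsStationaryIn S κ.ord ∧
        ∀ a' ∈ S, ∀ b' ∈ S, a' < b' →
          ∃ a ∈ 𝒜, ∃ b ∈ 𝒜, (∀ x ∈ a, ∀ y ∈ b, x < y) ∧
            Set.image2 (fun x y => t x y) a b = {(a', b')}

/-- `κ ↛ [κ]²_θ`: a coloring of `[κ]²` attaining every color on every subset of full size. -/
def NegFull (κ θ : Cardinal) : Prop :=
  ∃ c : Ordinal → Ordinal → Ordinal,
    (∀ α β : Ordinal, α < β → β < κ.ord → c α β < θ.ord) ∧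
    ∀ X ⊆ Set.Iio κ.ord, HasSize X κ →
      ∀ τ < θ.ord, ∃ x ∈ X, ∃ y ∈ X, x < y ∧ c x y = τ

/-- `κ ↛ [κ;κ]²_θ`: the rectangular version. -/
def NegRect (κ θ : Cardinal) : Prop :=
  ∃ c : Ordinal → Ordinal → Ordinal,
    (∀ α β : Ordinal, α < β → β < κ.ord → c α β < θ.ord) ∧
    ∀ X ⊆ Set.Iio κ.ord, HasSize X κ →
      ∀ Y ⊆ Set.Iio κ.ord, HasSize Y κ →
        ∀ τ < θ.ord, ∃ x ∈ X, ∃ y ∈ Y, x < y ∧ c x y = τ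

def IsUnboundedIn (S : Set Ordinal) (δ : Ordinal) : Prop :=
  ∀ β < δ, ∃ γ ∈ S, β < γ

theorem isClubIn_Ioo {δ β : Ordinal} (hδ : Order.IsSuccLimit δ) (hβ : β < δ) :
    IsClubIn (Ioo β δ) δ := by
  refine ⟨fun x hx => hx.2, fun α hα hacc => ?_, fun β' hβ' => ?_⟩
  · obtain ⟨γ, hγ, -, hγα⟩ := hacc.2 0 hacc.1
    exact ⟨hγ.1.trans hγα, hα⟩
  · refine ⟨Order.succ (max β β'), ⟨?_, hδ.succ_lt (max_lt hβ hβ')⟩, ?_⟩ <;>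
      exact Order.lt_succ_iff.2 (by simp)

theorem IsStationaryIn.isUnboundedIn {S : Set Ordinal} {δ : Ordinal}
    (hS : IsStationaryIn S δ) (hδ : Order.IsSuccLimit δ) : IsUnboundedIn S δ := fun _ hβ =>
  let ⟨γ, hγS, hγ⟩ := hS _ (isClubIn_Ioo hδ hβ)
  ⟨γ, hγS, hγ.1⟩

theorem hasSize_iff_isUnboundedIn {κ : Cardinal.{0}} (hκ : κ.IsRegular) {S : Set Ordinal.{0}}
    (hS : S ⊆ Iio κ.ord) : HasSize S κ ↔ IsUnboundedIn S κ.ord := by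
  have hle : #S ≤ lift.{1} κ := by
    simpa using mk_le_mk_of_subset hS
  constructor
  · intro hsize β hβ
    by_contra! hbdd
    have hsub : S ⊆ Iio (Order.succ β) := fun γ hγ => Order.lt_succ_iff.2 (hbdd γ hγ)
    have hlt : (Order.succ β).card < κ :=
      lt_ord.1 ((isSuccLimit_ord hκ.aleph0_le).succ_lt hβ)
    have := (mk_le_mk_of_subset hsub).trans_eq (mk_Iio_ordinal _)
    rw [hsize, lift_le] at this
    exact this.not_gt hlt
  · intro hub
    refine le_antisymm hle ?_
    have hcof : IsCofinal ((↑) ⁻¹' S : Set (Iio κ.ord)) := fun β =>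
      let ⟨γ, hγS, hβγ⟩ := hub β β.2
      ⟨⟨γ, hS hγS⟩, hγS, hβγ.le⟩
    calc lift.{1} κ = Order.cof (Iio κ.ord) := by
          rw [Ordinal.cof_Iio, ← Ordinal.lift_cof, hκ.cof_ord]
      _ ≤ #((↑) ⁻¹' S : Set (Iio κ.ord)) := Order.cof_le hcof
      _ = #S := mk_preimage_of_injective_of_subset_range _ _ Subtype.val_injective
          (by rwa [Subtype.range_coe])

theorem finite_of_orderIso_Iio {α : Type*} [Preorder α] {σ : Ordinal} (hσ : σ < ord ℵ₀)
    {a : Set α} (e : Iio σ ≃o a) : a.Finite := by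
  have : Finite (Iio σ) := by
    rw [← mk_lt_aleph0_iff, mk_Iio_ordinal, lift_lt_aleph0, ← lt_ord]
    exact hσ
  exact Set.finite_coe_iff.1 (Finite.of_equiv _ e.toEquiv)

theorem nonempty_orderIso_Iio_two_pair {α : Type*} [Preorder α] {x y : α} (hxy : x < y) :
    Nonempty (Iio (2 : Ordinal) ≃o ({x, y} : Set α)) := by
  let f : Iio (2 : Ordinal) → ({x, y} : Set α) := fun z =>
    if (z : Ordinal) = 0 then ⟨x, Or.inl rfl⟩ else ⟨y, Or.inr rfl⟩
  have hf : StrictMono f := by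
    rintro ⟨z, hz⟩ ⟨z', hz'⟩ (h : z < z')
    have hz0 : z = 0 := Order.lt_one_iff.1 (h.trans_le (Order.lt_two_iff.1 hz'))
    have hz'0 : z' ≠ 0 := by rintro rfl; simp at h
    simpa [f, hz0, hz'0, ← Subtype.coe_lt_coe] using hxy
  refine ⟨hf.orderIsoOfSurjective f ?_⟩
  rintro ⟨w, rfl | rfl⟩
  · exact ⟨⟨0, by norm_num⟩, by simp [f]⟩
  · exact ⟨⟨1, by norm_num⟩, by simp [f]⟩

theorem pairwiseDisjoint_of_forall_lt {ι α : Type*} [LinearOrder ι] [Preorder α]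
    {g : ι → Set α} {s : Set ι}
    (hlt : ∀ i ∈ s, ∀ j ∈ s, i < j → ∀ u ∈ g i, ∀ v ∈ g j, u < v) : s.PairwiseDisjoint g := by
  intro i hi j hj hij
  rw [Function.onFun, Set.disjoint_left]
  intro u hui huj
  rcases hij.lt_or_gt with h | h
  · exact (hlt i hi j hj h u hui u huj).false
  · exact (hlt j hj i hi h u huj u hui).false

theorem injOn_of_forall_lt {ι α : Type*} [LinearOrder ι] [Preorder α]
    {g : ι → Set α} {s : Set ι} (hne : ∀ i ∈ s, (g i).Nonempty)
    (hlt : ∀ i ∈ s, ∀ j ∈ s, i < j → ∀ u ∈ g i, ∀ v ∈ g j, u < v) : s.InjOn g := by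
  intro i hi j hj hij
  by_contra hne'
  obtain ⟨u, hu⟩ := hne i hi
  rcases lt_or_gt_of_ne hne' with h | h
  · exact (hlt i hi j hj h u hu u (hij ▸ hu)).false
  · exact (hlt j hj i hi h u (hij ▸ hu) u hu).false

noncomputable def nextPair (X Y : Set Ordinal) (β : Ordinal) : Ordinal × Ordinal :=
  (sInf (X ∩ Ioi β), sInf (Y ∩ Ioi (sInf (X ∩ Ioi β))))

theorem IsUnboundedIn.sInf_inter_Ioi_mem {X : Set Ordinal} {δ β : Ordinal}
    (hX : IsUnboundedIn X δ) (hβ : β < δ) : sInf (X ∩ Ioi β) ∈ X ∩ Ioi β :=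
  let ⟨γ, hγX, hβγ⟩ := hX β hβ
  csInf_mem ⟨γ, hγX, hβγ⟩

theorem nextPair_spec {X Y : Set Ordinal} {δ β : Ordinal} (hXδ : X ⊆ Iio δ)
    (hX : IsUnboundedIn X δ) (hYδ : Y ⊆ Iio δ) (hY : IsUnboundedIn Y δ) (hβ : β < δ) :
    (nextPair X Y β).1 ∈ X ∧ β < (nextPair X Y β).1 ∧ (nextPair X Y β).2 ∈ Y ∧
      (nextPair X Y β).1 < (nextPair X Y β).2 ∧ (nextPair X Y β).2 < δ := by
  obtain ⟨hxX, hβx⟩ := hX.sInf_inter_Ioi_mem hβ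
  obtain ⟨hyY, hxy⟩ := hY.sInf_inter_Ioi_mem (hXδ hxX)
  exact ⟨hxX, hβx, hyY, hxy, hYδ hyY⟩

noncomputable def separatedPairs (X Y : Set Ordinal.{0}) (ξ : Ordinal.{0}) : Ordinal × Ordinal :=
  nextPair X Y (⨆ η : Iio ξ, (separatedPairs X Y η).2)
termination_by ξ
decreasing_by exact η.2

section SeparatedPairs

variable {κ : Cardinal.{0}} {X Y : Set Ordinal.{0}}

theorem iSup_separatedPairs_lt (hκ : κ.IsRegular) (hXκ : X ⊆ Iio κ.ord)
    (hX : IsUnboundedIn X κ.ord) (hYκ : Y ⊆ Iio κ.ord) (hY : IsUnboundedIn Y κ.ord) {ξ : Ordinal}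
    (hξ : ξ < κ.ord) : ⨆ η : Iio ξ, (separatedPairs X Y η).2 < κ.ord := by
  induction ξ using WellFoundedLT.induction with
  | ind ξ IH =>
    refine Ordinal.lift_iSup_lt_of_lt_cof ?_ fun η => ?_
    · rwa [← Ordinal.lift_cof, hκ.cof_ord, mk_Iio_ordinal, lift_lift, lift_lt, ← lt_ord]
    · rw [separatedPairs]
      exact (nextPair_spec hXκ hX hYκ hY (IH η η.2 (η.2.trans hξ))).2.2.2.2

theorem separatedPairs_spec (hκ : κ.IsRegular) (hXκ : X ⊆ Iio κ.ord)
    (hX : IsUnboundedIn X κ.ord) (hYκ : Y ⊆ Iio κ.ord) (hY : IsUnboundedIn Y κ.ord) {ξ : Ordinal}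
    (hξ : ξ < κ.ord) :
    (separatedPairs X Y ξ).1 ∈ X ∧ (separatedPairs X Y ξ).2 ∈ Y ∧
      (separatedPairs X Y ξ).1 < (separatedPairs X Y ξ).2 ∧ (separatedPairs X Y ξ).2 < κ.ord ∧
      ∀ η < ξ, (separatedPairs X Y η).2 < (separatedPairs X Y ξ).1 := by
  obtain ⟨hxX, hsup, hyY, hxy, hyκ⟩ :=
    nextPair_spec hXκ hX hYκ hY (iSup_separatedPairs_lt hκ hXκ hX hYκ hY hξ)
  rw [separatedPairs]
  refine ⟨hxX, hyY, hxy, hyκ, fun η hη => (Ordinal.le_iSup _ ⟨η, hη⟩).trans_lt hsup⟩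

end SeparatedPairs

theorem NegRect.negFull {κ θ : Cardinal} : NegRect κ θ → NegFull κ θ := fun ⟨c, hc_lt, hc⟩ =>
  ⟨c, hc_lt, fun X hXκ hX τ hτ => hc X hXκ hX X hXκ hX τ hτ⟩

theorem NegFull.pr1 {κ : Cardinal.{0}} {θ : Cardinal} (hκ : κ.IsRegular) (hPl : Pl1Two κ) :
    NegFull κ θ → Pr1 κ θ ℵ₀ := by
  rintro ⟨c, hc_lt, hc⟩
  obtain ⟨t, ht_lt, ht⟩ := hPl
  refine ⟨fun α β => c (t α β).1 (t α β).2, fun α β hαβ hβ => ?_, ?_⟩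
  · obtain ⟨h₁, h₂, h₃⟩ := ht_lt α β hαβ hβ
    exact hc_lt _ _ (h₁.trans_lt h₂) (h₃.trans_lt hβ)
  intro σ hσ 𝒜 h𝒜 hdisj hsize i hi
  obtain ⟨S, hSκ, hS, hSt⟩ :=
    ht 𝒜 (fun a ha => ⟨finite_of_orderIso_Iio hσ (h𝒜 a ha).2.some, (h𝒜 a ha).1⟩) hdisj hsize
  have hS_size : HasSize S κ :=
    (hasSize_iff_isUnboundedIn hκ hSκ).2 (hS.isUnboundedIn (isSuccLimit_ord hκ.aleph0_le))
  obtain ⟨x, hx, y, hy, hxy, hcxy⟩ := hc S hSκ hS_size i hi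
  obtain ⟨a, ha, b, hb, hab, himg⟩ := hSt x hx y hy hxy
  refine ⟨a, ha, b, hb, hab, ?_⟩
  rw [← image_image2 (fun x y => t x y) (fun p => c p.1 p.2), himg, image_singleton, hcxy]

theorem mem_Icc_of_mem_pair {α : Type*} [Preorder α] {x y u : α} (hxy : x ≤ y)
    (hu : u ∈ ({x, y} : Set α)) : u ∈ Icc x y := by
  rcases hu with rfl | rfl
  exacts [⟨le_rfl, hxy⟩, ⟨hxy, le_rfl⟩]

theorem Pr1.negRect {κ : Cardinal.{0}} {θ : Cardinal} (hκ : κ.IsRegular) :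
    Pr1 κ θ ℵ₀ → NegRect κ θ := by
  rintro ⟨c, hc_lt, hc⟩
  refine ⟨c, hc_lt, fun X hXκ hX Y hYκ hY τ hτ => ?_⟩
  set p := separatedPairs X Y
  have hp : ∀ ξ < κ.ord, _ := fun ξ hξ => separatedPairs_spec hκ
    hXκ ((hasSize_iff_isUnboundedIn hκ hXκ).1 hX) hYκ ((hasSize_iff_isUnboundedIn hκ hYκ).1 hY) hξ
  let g : Ordinal → Set Ordinal := fun ξ => {(p ξ).1, (p ξ).2}
  have hsep : ∀ η ∈ Iio κ.ord, ∀ ξ ∈ Iio κ.ord, η < ξ → ∀ u ∈ g η, ∀ v ∈ g ξ, u < v := by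
    rintro η - ξ hξ hηξ u hu v hv
    calc u ≤ (p η).2 := (mem_Icc_of_mem_pair (hp η (hηξ.trans hξ)).2.2.1.le hu).2
      _ < (p ξ).1 := (hp ξ hξ).2.2.2.2 η hηξ
      _ ≤ v := (mem_Icc_of_mem_pair (hp ξ hξ).2.2.1.le hv).1
  have hinj : InjOn g (Iio κ.ord) := injOn_of_forall_lt (fun _ _ => insert_nonempty _ _) hsep
  have h𝒜 : ∀ a ∈ g '' Iio κ.ord, a ⊆ Iio κ.ord ∧ Nonempty (Iio (2 : Ordinal) ≃o a) := by
    rintro _ ⟨ξ, hξ, rfl⟩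
    obtain ⟨-, -, hxy, hyκ, -⟩ := hp ξ hξ
    exact ⟨fun u hu => (mem_Icc_of_mem_pair hxy.le hu).2.trans_lt hyκ,
      nonempty_orderIso_Iio_two_pair hxy⟩
  obtain ⟨-, ⟨η, hη, rfl⟩, -, ⟨ξ, hξ, rfl⟩, hlt, himg⟩ :=
    hc 2 (by simpa using Ordinal.natCast_lt_omega0 2) (g '' Iio κ.ord) h𝒜
      (hinj.pairwiseDisjoint_image.2 (pairwiseDisjoint_of_forall_lt hsep))
      (by rw [HasSize, mk_image_eq_of_injOn _ _ hinj, mk_Iio_ordinal, card_ord]) τ hτ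
  have hxg : (p η).1 ∈ g η := mem_insert _ _
  have hyg : (p ξ).2 ∈ g ξ := mem_insert_of_mem _ rfl
  exact ⟨(p η).1, (hp η hη).1, (p ξ).2, (hp ξ hξ).2.1, hlt _ hxg _ hyg,
    eq_of_mem_singleton (himg ▸ mem_image2_of_mem hxg hyg)⟩

theorem stmt12_general (κ θ : Cardinal) (hreg : κ.IsRegular) (hPl : Pl1Two κ) :
    (NegFull κ θ ↔ NegRect κ θ) ∧ (NegRect κ θ ↔ Pr1 κ θ ℵ₀) :=
  -- the universe of `ℵ₀` in the intermediate `Pr₁` is immaterial; it is fixed to `0`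
  ⟨⟨fun h => (NegFull.pr1.{_, 0} hreg hPl h).negRect hreg, NegRect.negFull⟩,
    ⟨fun h => h.negFull.pr1 hreg hPl, fun h => h.negRect hreg⟩⟩

/-- Corollary 2.15 (colorings part): assuming `Pl₁(κ)`, the principles `κ ↛ [κ]²_θ`,
`κ ↛ [κ;κ]²_θ` and `Pr₁(κ,κ,θ,ω)` are equivalent. -/
theorem stmt12 (κ θ : Cardinal) (hreg : κ.IsRegular) (hunc : ℵ₀ < κ) (hθ : θ ≤ κ)
    (hPl : Pl1Two κ) :
    (NegFull κ θ ↔ NegRect κ θ) ∧ (NegRect κ θ ↔ Pr1 κ θ ℵ₀) :=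
  stmt12_general κ θ hreg hPl

end Paper
end

section
/- Let κ be a regular uncountable cardinal and n a positive integer, and suppose c:[κ]²→n+1 witnesses Pr1(κ,κ,n+1,ω). Let P be the poset whose elements are the pairs (i,x) with i<n+1 and x a finite subset of κ such that i is not in the image c"[x]², ordered by (i,x)≤(j,y) iff i=j and x⊇y. Then the n-fold product Pⁿ satisfies the κ-cc, while the (n+1)-fold product P^{n+1} does not satisfy the κ-cc. -/
/-!
Given `κ` many conditions of `Pⁿ`, thin them out (pigeonhole on the colour vectors, the
Δ-system lemma on the supports, pigeonhole on the traces on the root `r` and on the sizes of the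
tails `support \ r`) to `κ` many with the same colours, the same traces on `r` and pairwise
disjoint tails of one size `m`. Only `n` of the `n + 1` colours occur, so `Pr₁` applied to the
tails and a missing colour `i` gives two conditions `f`, `g` with `tail f < tail g` and
`c ≡ i` on `tail f × tail g`. Then every coordinatewise union `f k ∪ g k` is still a condition,
so `f` and `g` are compatible.

In `Pⁿ⁺¹` the conditions `α ↦ (k ↦ (k, {α}))` form an antichain of size `κ`: a common extension
of those for `α < β` fails in the coordinate `c α β`.
-/

namespace Paper

open Cardinal Set

/-- The `κ`-chain condition for a carrier `P` with ordering `le`: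
every set of pairwise incompatible elements has size less than `κ`. -/
def KappaCC (κ : Cardinal.{0}) {P : Type 1} (le : P → P → Prop) : Prop :=
  ∀ A : Set P,
    (∀ p ∈ A, ∀ q ∈ A, p ≠ q → ¬∃ r, le r p ∧ le r q) →
    #A < Cardinal.lift.{1} κ

/-- The poset of Corollary 2.17: conditions are pairs `(i, x)` with `i < n + 1` and
`x` a finite subset of `κ` such that `i ∉ c``[x]²`. -/
def PosetP (κ : Cardinal) (n : ℕ) (c : Ordinal → Ordinal → ℕ) : Type 1 :=
  {p : ℕ × Set Ordinal // p.1 < n + 1 ∧ p.2.Finite ∧ p.2 ⊆ Set.Iio κ.ord ∧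
    ∀ x ∈ p.2, ∀ y ∈ p.2, x < y → c x y ≠ p.1}

/-- `(i,x) ≤ (j,y)` iff `i = j` and `x ⊇ y`. -/
def PosetLe (κ : Cardinal) (n : ℕ) (c : Ordinal → Ordinal → ℕ) :
    PosetP κ n c → PosetP κ n c → Prop :=
  fun p q => p.val.1 = q.val.1 ∧ q.val.2 ⊆ p.val.2

end Paper

open Cardinal Set

universe u v

namespace Cardinal

theorem exists_subset_le_mk_of_countable_image {ι : Type u} {β : Type v} {κ : Cardinal.{u}}
    (hκ : κ.IsRegular) (hω : ℵ₀ < κ) {S : Set ι} (hS : κ ≤ #S) (f : ι → β)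
    (hf : (f '' S).Countable) : ∃ T ⊆ S, κ ≤ #T ∧ ∃ b, ∀ i ∈ T, f i = b := by
  by_contra! hsmall
  have hfiber (b : f '' S) : #{i | i ∈ S ∧ f i = b} < κ := by
    by_contra! hb
    obtain ⟨i, hi, hne⟩ := hsmall _ (fun i hi => hi.1) hb b
    exact hne hi.2
  have hcover : S ⊆ ⋃ b : f '' S, {i | i ∈ S ∧ f i = b} := fun i hi =>
    mem_iUnion.2 ⟨⟨f i, mem_image_of_mem f hi⟩, hi, rfl⟩
  have hcount : lift.{u} #(f '' S) < lift.{v} κ :=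
    (by simpa using hf.le_aleph0 : lift.{u} #(f '' S) ≤ ℵ₀).trans_lt (by simpa using hω)
  have hlt : lift.{v} #S < lift.{v} κ :=
    calc lift.{v} #S ≤ lift.{v} #(⋃ b : f '' S, {i | i ∈ S ∧ f i = b}) :=
          lift_le.2 (mk_le_mk_of_subset hcover)
      _ ≤ lift.{u} #(f '' S) * ⨆ b : f '' S, lift.{v} #{i | i ∈ S ∧ f i = b} :=
          mk_iUnion_le_lift _
      _ < lift.{v} κ := by
        refine mul_lt_of_lt (by simpa using hω.le) hcount
          (lift_iSup_lt_of_lt_cof_ord ?_ fun b => lift_lt.2 (hfiber b))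
        rwa [lift_lift, hκ.lift.cof_ord, lift_umax]
  exact (lift_lt.1 hlt).not_ge hS

variable {ι α : Type u} {κ : Cardinal.{u}}

theorem mk_lt_of_subset_union {S T U : Set ι} (hκ : ℵ₀ ≤ κ) (h : S ⊆ T ∪ U) (hT : #T < κ)
    (hU : #U < κ) : #S < κ :=
  (mk_le_mk_of_subset h).trans_lt ((mk_union_le T U).trans_lt (add_lt_of_lt hκ hT hU))

/-- A maximal disjoint subfamily of size `< κ` could be extended by any index whose set avoids
the `< κ` points of its union. -/
theorem exists_subset_le_mk_pairwiseDisjoint (hκ : κ.IsRegular) {S : Set ι} (hS : κ ≤ #S)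
    {F : ι → Set α} (hfin : ∀ i ∈ S, (F i).Finite) (hpt : ∀ x, #{i | i ∈ S ∧ x ∈ F i} < κ) :
    ∃ T ⊆ S, κ ≤ #T ∧ T.PairwiseDisjoint F := by
  obtain ⟨D, hD⟩ := zorn_subset {D | D ⊆ S ∧ D.PairwiseDisjoint F} fun C hCS hC => by
    refine ⟨⋃₀ C, ⟨sUnion_subset fun D hD => (hCS hD).1, ?_⟩, fun D => subset_sUnion_of_mem⟩
    exact (pairwiseDisjoint_sUnion hC.directedOn).2 fun D hD => (hCS hD).2
  refine ⟨D, hD.prop.1, not_lt.1 fun hDκ => ?_, hD.prop.2⟩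
  set U := ⋃ i ∈ D, F i
  have hU : #U < κ := (card_biUnion_lt_iff_forall_of_isRegular hκ hDκ).2 fun i hi =>
    (hfin i (hD.prop.1 hi)).lt_aleph0.trans_le hκ.aleph0_le
  have hmeet : #(⋃ x ∈ U, {i | i ∈ S ∧ x ∈ F i}) < κ :=
    (card_biUnion_lt_iff_forall_of_isRegular hκ hU).2 fun x _ => hpt x
  obtain ⟨i, hiS, hi⟩ := not_subset.1 fun h =>
    hS.not_gt (mk_lt_of_subset_union hκ.aleph0_le h hDκ hmeet)
  have hdisj : ∀ j ∈ D, i ≠ j → Disjoint (F i) (F j) := fun j hj _ =>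
    disjoint_left.2 fun x hxi hxj =>
      hi (Or.inr (mem_biUnion (mem_biUnion hj hxj) ⟨hiS, hxi⟩))
  have hins : insert i D ∈ {D | D ⊆ S ∧ D.PairwiseDisjoint F} :=
    ⟨insert_subset hiS hD.prop.1, hD.prop.2.insert hdisj⟩
  exact hi (Or.inl (hD.mem_of_prop_insert hins))

theorem exists_subset_le_mk_deltaSystem_of_ncard_le (hκ : κ.IsRegular) (m : ℕ) {S : Set ι}
    (hS : κ ≤ #S) {F : ι → Set α} (hF : ∀ i ∈ S, (F i).Finite ∧ (F i).ncard ≤ m) :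
    ∃ T ⊆ S, κ ≤ #T ∧ ∃ r, r.Finite ∧ T.Pairwise fun i j => F i ∩ F j = r := by
  induction m generalizing S F with
  | zero =>
    refine ⟨S, subset_rfl, hS, ∅, finite_empty, fun i hi _ _ _ => ?_⟩
    show F i ∩ _ = ∅
    rw [(ncard_eq_zero (hF i hi).1).1 (Nat.le_zero.1 (hF i hi).2), empty_inter]
  | succ m ih =>
    by_cases hx : ∃ x, κ ≤ #{i | i ∈ S ∧ x ∈ F i}
    · obtain ⟨x, hx⟩ := hx
      obtain ⟨T, hTS, hT, r, hrfin, hr⟩ := ih hx (F := fun i => F i \ {x}) fun i hi =>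
        ⟨(hF i hi.1).1.sdiff, by
          rw [ncard_sdiff_singleton_of_mem hi.2]; have := (hF i hi.1).2; omega⟩
      refine ⟨T, fun i hi => (hTS hi).1, hT, insert x r, hrfin.insert x, fun i hi j hj hij => ?_⟩
      rw [← hr hi hj hij, insert_inter_distrib, insert_sdiff_singleton, insert_sdiff_singleton,
        insert_eq_of_mem (hTS hi).2, insert_eq_of_mem (hTS hj).2]
    · obtain ⟨T, hTS, hT, hdisj⟩ := exists_subset_le_mk_pairwiseDisjoint hκ hS
        (fun i hi => (hF i hi).1) (by simpa using hx)
      exact ⟨T, hTS, hT, ∅, finite_empty, fun i hi j hj hij =>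
        disjoint_iff_inter_eq_empty.1 (hdisj hi hj hij)⟩

theorem exists_subset_le_mk_deltaSystem (hκ : κ.IsRegular) (hω : ℵ₀ < κ) {S : Set ι}
    (hS : κ ≤ #S) {F : ι → Set α} (hF : ∀ i ∈ S, (F i).Finite) :
    ∃ T ⊆ S, κ ≤ #T ∧ ∃ r, r.Finite ∧ T.Pairwise fun i j => F i ∩ F j = r := by
  obtain ⟨S', hS'S, hS', m, hm⟩ := exists_subset_le_mk_of_countable_image hκ hω hS
    (fun i => (F i).ncard) (to_countable _)
  obtain ⟨T, hTS', hT, hr⟩ := exists_subset_le_mk_deltaSystem_of_ncard_le hκ m hS'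
    fun i hi => ⟨hF i (hS'S hi), (hm i hi).le⟩
  exact ⟨T, hTS'.trans hS'S, hT, hr⟩

end Cardinal

theorem Set.Finite.nonempty_orderIso_of_ncard_eq {α β : Type*} [LinearOrder α] [LinearOrder β]
    {s : Set α} {t : Set β} (hs : s.Finite) (ht : t.Finite) (h : s.ncard = t.ncard) :
    Nonempty (s ≃o t) := by
  have := hs.fintype
  have := ht.fintype
  exact ⟨(Fintype.orderIsoFinOfCardEq s (fintypeCard_eq_ncard s)).symm.trans
    (Fintype.orderIsoFinOfCardEq t ((fintypeCard_eq_ncard t).trans h.symm))⟩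

theorem Set.Finite.nonempty_orderIso_Iio_ncard {α : Type*} [LinearOrder α] {s : Set α}
    (hs : s.Finite) : Nonempty (Iio (s.ncard : Ordinal.{u}) ≃o s) := by
  rw [← Ordinal.natCast_image_Iio]
  refine ((finite_Iio _).image _).nonempty_orderIso_of_ncard_eq hs ?_
  rw [ncard_image_of_injective _ Nat.cast_injective, ncard_Iio_nat]

namespace Paper

/-- `c` witnesses `Pr₁(κ, κ, n + 1, ω)`; a set of order type `m` is one order isomorphic to
`Iio m`. -/
def IsPr1Witness (κ : Cardinal) (n : ℕ) (c : Ordinal → Ordinal → ℕ) : Prop :=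
  ∀ m : ℕ, ∀ 𝒜 : Set (Set Ordinal),
    (∀ a ∈ 𝒜, a ⊆ Set.Iio κ.ord ∧ Nonempty (↥(Set.Iio (m : Ordinal.{u})) ≃o ↥a)) →
    𝒜.PairwiseDisjoint id →
    HasSize 𝒜 κ →
    ∀ i < n + 1,
      ∃ a ∈ 𝒜, ∃ b ∈ 𝒜, (∀ x ∈ a, ∀ y ∈ b, x < y) ∧
        Set.image2 (fun x y => c x y) a b = {i}

section

variable {κ : Cardinal} {n : ℕ} {c : Ordinal → Ordinal → ℕ}

theorem PosetP.exists_le_le_of_sdiff_subset {p q : PosetP κ n c} (hcol : p.1.1 = q.1.1)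
    {a b : Set Ordinal} (hab : ∀ x ∈ a, ∀ y ∈ b, x < y) (hpa : p.1.2 \ q.1.2 ⊆ a)
    (hqb : q.1.2 \ p.1.2 ⊆ b) (hc : ∀ x ∈ a, ∀ y ∈ b, c x y ≠ p.1.1) :
    ∃ r, PosetLe κ n c r p ∧ PosetLe κ n c r q := by
  refine ⟨⟨(p.1.1, p.1.2 ∪ q.1.2), p.2.1, p.2.2.1.union q.2.2.1,
    union_subset p.2.2.2.1 q.2.2.2.1, fun x hx y hy hxy => ?_⟩,
    ⟨rfl, subset_union_left⟩, ⟨hcol, subset_union_right⟩⟩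
  by_cases hp : x ∈ p.1.2 ∧ y ∈ p.1.2
  · exact p.2.2.2.2 x hp.1 y hp.2 hxy
  by_cases hq : x ∈ q.1.2 ∧ y ∈ q.1.2
  · exact hcol ▸ q.2.2.2.2 x hq.1 y hq.2 hxy
  rcases hx with hxp | hxq <;> rcases hy with hyp | hyq
  · exact absurd ⟨hxp, hyp⟩ hp
  · exact hc x (hpa ⟨hxp, fun h => hq ⟨h, hyq⟩⟩) y (hqb ⟨hyq, fun h => hp ⟨hxp, h⟩⟩)
  · exact absurd (hab y (hpa ⟨hyp, fun h => hq ⟨hxq, h⟩⟩) x (hqb ⟨hxq, fun h => hp ⟨h, hyp⟩⟩))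
      hxy.not_gt
  · exact absurd ⟨hxq, hyq⟩ hq

section Support

variable {ι : Type} (f : ι → PosetP κ n c)

def support : Set Ordinal := ⋃ i, (f i).1.2

theorem subset_support (i : ι) : (f i).1.2 ⊆ support f := subset_iUnion (fun i => (f i).1.2) i

theorem support_finite [Finite ι] : (support f).Finite := finite_iUnion fun i => (f i).2.2.1

theorem support_subset_Iio : support f ⊆ Iio κ.ord := iUnion_subset fun i => (f i).2.2.2.1

end Support

theorem sdiff_subset_support_sdiff {ι : Type} {f g : ι → PosetP κ n c} {r : Set Ordinal} {i : ι}
    (htr : (f i).1.2 ∩ r = (g i).1.2 ∩ r) : (f i).1.2 \ (g i).1.2 ⊆ support f \ r :=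
  fun _ ⟨hxf, hxg⟩ => ⟨subset_support f i hxf, fun hxr => hxg (htr ▸ mem_inter hxf hxr).1⟩

theorem exists_pi_le_le_of_sdiff_lt {ι : Type} {f g : ι → PosetP κ n c} {r : Set Ordinal}
    (hcol : ∀ i, (f i).1.1 = (g i).1.1) (htr : ∀ i, (f i).1.2 ∩ r = (g i).1.2 ∩ r)
    (hlt : ∀ x ∈ support f \ r, ∀ y ∈ support g \ r, x < y)
    (hc : ∀ x ∈ support f \ r, ∀ y ∈ support g \ r, ∀ i, c x y ≠ (f i).1.1) :
    ∃ h : ι → PosetP κ n c, (∀ i, PosetLe κ n c (h i) (f i)) ∧ ∀ i, PosetLe κ n c (h i) (g i) := by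
  choose h hf hg using fun i => PosetP.exists_le_le_of_sdiff_subset (hcol i) hlt
    (sdiff_subset_support_sdiff (htr i)) (sdiff_subset_support_sdiff (htr i).symm)
    fun x hx y hy => hc x hx y hy i
  exact ⟨h, hf, hg⟩

theorem eq_of_support_sdiff_eq {ι : Type} {f g : ι → PosetP κ n c} {r : Set Ordinal}
    (hcol : ∀ i, (f i).1.1 = (g i).1.1) (htr : ∀ i, (f i).1.2 ∩ r = (g i).1.2 ∩ r)
    (hfg : support f ∩ support g = r) (h : support f \ r = support g \ r) : f = g := by
  have hf : support f ⊆ r := fun x hx => by_contra fun hxr =>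
    hxr (hfg ▸ ⟨hx, (h ▸ ⟨hx, hxr⟩ : x ∈ support g \ r).1⟩)
  have hg : support g ⊆ r := fun x hx => by_contra fun hxr =>
    hxr (hfg ▸ ⟨(h ▸ ⟨hx, hxr⟩ : x ∈ support f \ r).1, hx⟩)
  funext i
  refine Subtype.ext (Prod.ext (hcol i) ?_)
  rw [← inter_eq_left.2 ((subset_support f i).trans hf),
    ← inter_eq_left.2 ((subset_support g i).trans hg), htr i]

theorem exists_uniform_subfamily {ι : Type} [Finite ι] {θ : Cardinal.{1}} (hθ : θ.IsRegular)
    (hω : ℵ₀ < θ) {A : Set (ι → PosetP κ n c)} (hA : θ ≤ #A) :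
    ∃ B ⊆ A, θ ≤ #B ∧ ∃ r, B.Pairwise (fun f g => support f ∩ support g = r) ∧
      ∃ (col : ι → ℕ) (tr : ι → Set Ordinal) (m : ℕ), ∀ f ∈ B,
        (∀ i, (f i).1.1 = col i) ∧ (∀ i, (f i).1.2 ∩ r = tr i) ∧ (support f \ r).ncard = m := by
  obtain ⟨A₁, hA₁A, hA₁, col, hcol⟩ := exists_subset_le_mk_of_countable_image hθ hω hA
    (fun f i => (f i).1.1) (to_countable _)
  obtain ⟨A₂, hA₂A₁, hA₂, r, hr, hΔ⟩ := exists_subset_le_mk_deltaSystem hθ hω hA₁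
    (F := support) fun f _ => support_finite f
  obtain ⟨A₃, hA₃A₂, hA₃, ⟨tr, m⟩, htr⟩ := exists_subset_le_mk_of_countable_image hθ hω hA₂
    (fun f => ((fun i => (f i).1.2 ∩ r), (support f \ r).ncard)) <| by
      refine ((Finite.pi fun _ => hr.finite_subsets).countable.prod countable_univ).mono ?_
      rintro _ ⟨f, -, rfl⟩
      exact ⟨fun i _ => inter_subset_right, mem_univ _⟩
  refine ⟨A₃, hA₃A₂.trans (hA₂A₁.trans hA₁A), hA₃, r, hΔ.mono hA₃A₂, col, tr, m, fun f hf => ?_⟩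
  obtain ⟨htrf, hmf⟩ := Prod.ext_iff.1 (htr f hf)
  exact ⟨congrFun (hcol f (hA₂A₁ (hA₃A₂ hf))), congrFun htrf, hmf⟩

theorem IsPr1Witness.exists_ne_sdiff_homogeneous (hwit : IsPr1Witness.{u} κ n c) {ι : Type}
    [Finite ι] {B : Set (ι → PosetP κ n c)} (hB : lift.{1} κ ≤ #B) {r : Set Ordinal}
    (hΔ : B.Pairwise fun f g => support f ∩ support g = r)
    (hinj : InjOn (fun f => support f \ r) B) {m : ℕ} (hm : ∀ f ∈ B, (support f \ r).ncard = m)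
    {i₀ : ℕ} (hi₀ : i₀ < n + 1) :
    ∃ f ∈ B, ∃ g ∈ B, f ≠ g ∧ ∀ x ∈ support f \ r, ∀ y ∈ support g \ r, x < y ∧ c x y = i₀ := by
  obtain ⟨𝒜, h𝒜B, h𝒜⟩ :=
    le_mk_iff_exists_subset.1 (hB.trans_eq (mk_image_eq_of_injOn _ _ hinj).symm)
  have h𝒜tails : ∀ a ∈ 𝒜, a ⊆ Iio κ.ord ∧ Nonempty (Iio (m : Ordinal.{u}) ≃o a) := by
    rintro _ ha
    obtain ⟨f, hf, rfl⟩ := h𝒜B ha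
    exact ⟨sdiff_subset.trans (support_subset_Iio f),
      hm f hf ▸ (support_finite f).sdiff.nonempty_orderIso_Iio_ncard⟩
  have h𝒜disj : 𝒜.PairwiseDisjoint id := by
    rintro _ ha _ hb hab
    obtain ⟨f, hf, rfl⟩ := h𝒜B ha
    obtain ⟨g, hg, rfl⟩ := h𝒜B hb
    have hfg : f ≠ g := by rintro rfl; exact hab rfl
    exact disjoint_left.2 fun x hxf hxg => hxf.2 (hΔ hf hg hfg ▸ ⟨hxf.1, hxg.1⟩)
  obtain ⟨_, ha, _, hb, hab, hcab⟩ := hwit m 𝒜 h𝒜tails h𝒜disj h𝒜 i₀ hi₀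
  obtain ⟨f, hf, rfl⟩ := h𝒜B ha
  obtain ⟨g, hg, rfl⟩ := h𝒜B hb
  have hfg : f ≠ g := by
    rintro rfl
    obtain ⟨_, ⟨x, hx, y, hy, -⟩⟩ := hcab ▸ singleton_nonempty i₀
    exact (hab x hx x hx).false
  exact ⟨f, hf, g, hg, hfg, fun x hx y hy =>
    ⟨hab x hx y hy, mem_singleton_iff.1 (hcab ▸ mem_image2_of_mem hx hy)⟩⟩

theorem kappaCC_pi (hκ : κ.IsRegular) (hω : ℵ₀ < κ) (hwit : IsPr1Witness.{u} κ n c) :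
    KappaCC κ (fun f g : Fin n → PosetP κ n c => ∀ i, PosetLe κ n c (f i) (g i)) := by
  intro A hanti
  by_contra! hA
  obtain ⟨B, hBA, hB, r, hΔ, col, tr, m, hunif⟩ :=
    exists_uniform_subfamily hκ.lift (by simpa using hω) hA
  have hcol (f) (hf : f ∈ B) (g) (hg : g ∈ B) (i) : (f i).1.1 = (g i).1.1 :=
    ((hunif f hf).1 i).trans ((hunif g hg).1 i).symm
  have htr (f) (hf : f ∈ B) (g) (hg : g ∈ B) (i) : (f i).1.2 ∩ r = (g i).1.2 ∩ r :=
    ((hunif f hf).2.1 i).trans ((hunif g hg).2.1 i).symm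
  have hinj : InjOn (fun f => support f \ r) B := fun f hf g hg h => by
    by_contra hfg
    exact hfg (eq_of_support_sdiff_eq (hcol f hf g hg) (htr f hf g hg) (hΔ hf hg hfg) h)
  obtain ⟨i₀, hi₀, hcol₀⟩ : ∃ i₀ ∈ Finset.range (n + 1), i₀ ∉ Finset.univ.image col :=
    Finset.exists_mem_notMem_of_card_lt_card (Finset.card_image_le.trans_lt (by simp))
  obtain ⟨f, hf, g, hg, hfg, hhom⟩ := hwit.exists_ne_sdiff_homogeneous hB hΔ hinj
    (fun f hf => (hunif f hf).2.2) (Finset.mem_range.1 hi₀)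
  refine hanti f (hBA hf) g (hBA hg) hfg (exists_pi_le_le_of_sdiff_lt (hcol f hf g hg)
    (htr f hf g hg) (fun x hx y hy => (hhom x hx y hy).1) fun x hx y hy i => ?_)
  rw [(hhom x hx y hy).2, (hunif f hf).1 i]
  exact fun h => hcol₀ (Finset.mem_image.2 ⟨i, Finset.mem_univ i, h.symm⟩)

theorem not_kappaCC_pi_succ (hc : ∀ α β : Ordinal, α < β → β < κ.ord → c α β < n + 1) :
    ¬ KappaCC κ (fun f g : Fin (n + 1) → PosetP κ n c => ∀ i, PosetLe κ n c (f i) (g i)) := by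
  intro hcc
  let g : Iio κ.ord → Fin (n + 1) → PosetP κ n c := fun α i =>
    ⟨(i, {α.1}), i.2, finite_singleton _, singleton_subset_iff.2 α.2,
      fun _ hx y hy hxy => absurd (hx.trans hy.symm ▸ hxy) (lt_irrefl y)⟩
  have hg : Function.Injective g := fun α β h =>
    Subtype.ext (singleton_eq_singleton_iff.1 (congrArg (fun f => (f 0).1.2) h))
  have hincomp (α β : Iio κ.ord) (hαβ : α.1 < β.1) (r : Fin (n + 1) → PosetP κ n c)
      (hα : ∀ i, PosetLe κ n c (r i) (g α i)) (hβ : ∀ i, PosetLe κ n c (r i) (g β i)) : False :=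
    let j : Fin (n + 1) := ⟨c α β, hc _ _ hαβ β.2⟩
    (r j).2.2.2.2 α ((hα j).2 rfl) β ((hβ j).2 rfl) hαβ (hα j).1.symm
  refine (hcc (range g) ?_).ne ?_
  · rintro _ ⟨α, rfl⟩ _ ⟨β, rfl⟩ hne ⟨r, hα, hβ⟩
    rcases lt_or_gt_of_ne fun h => hne (congrArg g (Subtype.ext h)) with hαβ | hβα
    · exact hincomp α β hαβ r hα hβ
    · exact hincomp β α hβα r hβ hα
  · rw [mk_range_eq g hg, mk_Iio_ordinal, card_ord]

end

theorem stmt14_general (κ : Cardinal) (hreg : κ.IsRegular) (hunc : ℵ₀ < κ)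
    (n : ℕ) (c : Ordinal → Ordinal → ℕ)
    (hc : ∀ α β : Ordinal, α < β → β < κ.ord → c α β < n + 1)
    (hwit : ∀ m : ℕ, ∀ 𝒜 : Set (Set Ordinal),
      (∀ a ∈ 𝒜, a ⊆ Set.Iio κ.ord ∧ Nonempty (↥(Set.Iio (m : Ordinal)) ≃o ↥a)) →
      𝒜.PairwiseDisjoint id →
      HasSize 𝒜 κ →
      ∀ i < n + 1,
        ∃ a ∈ 𝒜, ∃ b ∈ 𝒜, (∀ x ∈ a, ∀ y ∈ b, x < y) ∧
          Set.image2 (fun x y => c x y) a b = {i}) :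
    KappaCC κ (fun f g : Fin n → PosetP κ n c => ∀ i, PosetLe κ n c (f i) (g i)) ∧
    ¬ KappaCC κ
      (fun f g : Fin (n + 1) → PosetP κ n c => ∀ i, PosetLe κ n c (f i) (g i)) :=
  ⟨kappaCC_pi hreg hunc hwit, not_kappaCC_pi_succ hc⟩

/-- Corollary 2.17 (main construction): if `c : [κ]² → n + 1` witnesses `Pr₁(κ,κ,n+1,ω)`,
then the `n`-th power of the associated poset is `κ`-cc, while its `(n+1)`-st power is not. -/
theorem stmt14 (κ : Cardinal) (hreg : κ.IsRegular) (hunc : ℵ₀ < κ)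
    (n : ℕ) (hn : 0 < n) (c : Ordinal → Ordinal → ℕ)
    (hc : ∀ α β : Ordinal, α < β → β < κ.ord → c α β < n + 1)
    (hwit : ∀ m : ℕ, ∀ 𝒜 : Set (Set Ordinal),
      (∀ a ∈ 𝒜, a ⊆ Set.Iio κ.ord ∧ Nonempty (↥(Set.Iio (m : Ordinal)) ≃o ↥a)) →
      𝒜.PairwiseDisjoint id →
      HasSize 𝒜 κ →
      ∀ i < n + 1,
        ∃ a ∈ 𝒜, ∃ b ∈ 𝒜, (∀ x ∈ a, ∀ y ∈ b, x < y) ∧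
          Set.image2 (fun x y => c x y) a b = {i}) :
    KappaCC κ (fun f g : Fin n → PosetP κ n c => ∀ i, PosetLe κ n c (f i) (g i)) ∧
    ¬ KappaCC κ
      (fun f g : Fin (n + 1) → PosetP κ n c => ∀ i, PosetLe κ n c (f i) (g i)) :=
  stmt14_general κ hreg hunc n c hc hwit

end Paper
end

section
/- Let κ be a regular uncountable cardinal and χ an infinite regular cardinal with χ⁺⁺<κ. If there exists a stationary subset of E^κ_{≥χ} that is nonreflecting, then there exist an infinite regular cardinal ν with χ≤ν<κ and ν⁺<κ, and a stationary subset Γ⊆E^κ_{≥χ}∩E^κ_{≠ν⁺} that is nonreflecting. -/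
namespace Paper

open Cardinal Set

/-!
Split the nonreflecting stationary set `S` according to whether `cf α = χ⁺`. Since the club
filter on `κ` is closed under finite intersections, one of the two pieces is stationary, and
every subset of a nonreflecting set is nonreflecting. If the piece with `cf α ≠ χ⁺` is
stationary take `ν = χ`; otherwise the piece with `cf α = χ⁺` avoids cofinality `χ⁺⁺`, so
take `ν = χ⁺`.
-/

theorem IsAccPt.mono {C D : Set Ordinal} {α : Ordinal} (hCD : C ⊆ D) (h : IsAccPt C α) :
    IsAccPt D α :=
  ⟨h.1, fun β hβ => (h.2 β hβ).imp fun _ hγ => ⟨hCD hγ.1, hγ.2⟩⟩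

theorem isAccPt_iSup {C : Set Ordinal} {u : ℕ → Ordinal}
    (h : ∀ n, ∃ γ ∈ C, u n < γ ∧ ∃ m, γ < u m) : IsAccPt C (⨆ n, u n) := by
  refine ⟨?_, fun β hβ => ?_⟩
  · obtain ⟨γ, -, hγ, m, hγm⟩ := h 0
    exact (zero_le.trans_lt hγ).trans_le ((hγm.le).trans (Ordinal.le_iSup u m))
  · obtain ⟨n, hn⟩ := Ordinal.lt_iSup_iff.mp hβ
    obtain ⟨γ, hγC, hγ, m, hγm⟩ := h n
    exact ⟨γ, hγC, hn.trans hγ, hγm.trans_le (Ordinal.le_iSup u m)⟩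

namespace IsClubIn

variable {C C₁ C₂ : Set Ordinal} {δ : Ordinal}

theorem exists_next (h : IsClubIn C δ) :
    ∃ f : Ordinal → Ordinal, ∀ x < δ, f x ∈ C ∧ x < f x ∧ f x < δ := by
  have : ∀ x, ∃ y, x < δ → y ∈ C ∧ x < y ∧ y < δ := fun x => by
    by_cases hx : x < δ
    · obtain ⟨y, hyC, hxy⟩ := h.2.2 x hx
      exact ⟨y, fun _ => ⟨hyC, hxy, h.1 hyC⟩⟩
    · exact ⟨0, fun h' => absurd h' hx⟩
  choose f hf using this
  exact ⟨f, fun x hx => hf x hx⟩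

/-- Alternately climbing into `C₁` and `C₂` for `ω` steps produces a common limit point, which
stays below `δ` because `cf δ > ω`. -/
theorem inter (hδ : ℵ₀ < δ.cof) (h₁ : IsClubIn C₁ δ) (h₂ : IsClubIn C₂ δ) :
    IsClubIn (C₁ ∩ C₂) δ := by
  refine ⟨fun x hx => h₁.1 hx.1, fun α hα hacc => ?_, fun β hβ => ?_⟩
  · exact ⟨h₁.2.1 α hα (hacc.mono inter_subset_left), h₂.2.1 α hα (hacc.mono inter_subset_right)⟩
  obtain ⟨f₁, hf₁⟩ := h₁.exists_next
  obtain ⟨f₂, hf₂⟩ := h₂.exists_next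
  set u : ℕ → Ordinal := fun n => (f₂ ∘ f₁)^[n] β
  have hu_succ : ∀ n, u (n + 1) = f₂ (f₁ (u n)) := fun n =>
    Function.iterate_succ_apply' (f₂ ∘ f₁) n β
  have hu_lt : ∀ n, u n < δ := fun n => by
    induction n with
    | zero => exact hβ
    | succ n ih => rw [hu_succ]; exact (hf₂ _ (hf₁ _ ih).2.2).2.2
  have hstep : ∀ n, f₁ (u n) ∈ C₁ ∧ u (n + 1) ∈ C₂ ∧ u n < f₁ (u n) ∧ f₁ (u n) < u (n + 1) :=
    fun n => by
      obtain ⟨hmem₁, hlt₁, hδ₁⟩ := hf₁ _ (hu_lt n)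
      obtain ⟨hmem₂, hlt₂, -⟩ := hf₂ _ hδ₁
      rw [hu_succ]
      exact ⟨hmem₁, hmem₂, hlt₁, hlt₂⟩
  have hu_lt_succ : ∀ n, u n < u (n + 1) := fun n => (hstep n).2.2.1.trans (hstep n).2.2.2
  have hacc₁ : IsAccPt C₁ (⨆ n, u n) := isAccPt_iSup fun n =>
    ⟨f₁ (u n), (hstep n).1, (hstep n).2.2.1, n + 1, (hstep n).2.2.2⟩
  have hacc₂ : IsAccPt C₂ (⨆ n, u n) := isAccPt_iSup fun n =>
    ⟨u (n + 1), (hstep n).2.1, hu_lt_succ n, n + 2, hu_lt_succ (n + 1)⟩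
  have hsup : (⨆ n, u n) < δ := Ordinal.lift_iSup_lt_of_lt_cof (by simpa using hδ) hu_lt
  refine ⟨⨆ n, u n, ⟨h₁.2.1 _ hsup hacc₁, h₂.2.1 _ hsup hacc₂⟩, ?_⟩
  exact (hu_lt_succ 0).trans_le (Ordinal.le_iSup u 1)

end IsClubIn

namespace IsStationaryIn

variable {S T : Set Ordinal} {δ : Ordinal}

theorem mono (hST : S ⊆ T) (hS : IsStationaryIn S δ) : IsStationaryIn T δ :=
  fun C hC => (hS C hC).mono (inter_subset_inter_left C hST)

theorem sep_or_sep_not (hδ : ℵ₀ < δ.cof) (hS : IsStationaryIn S δ) (p : Ordinal → Prop) :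
    IsStationaryIn {x ∈ S | p x} δ ∨ IsStationaryIn {x ∈ S | ¬ p x} δ := by
  refine or_iff_not_imp_left.2 fun h C hC => ?_
  obtain ⟨C₁, hC₁, hne⟩ : ∃ C₁, IsClubIn C₁ δ ∧ ¬ ({x ∈ S | p x} ∩ C₁).Nonempty := by
    simpa only [IsStationaryIn, not_forall, exists_prop] using h
  obtain ⟨x, hxS, hx₁, hx⟩ := hS _ (hC₁.inter hδ hC)
  exact ⟨x, ⟨hxS, fun hp => hne ⟨x, ⟨hxS, hp⟩, hx₁⟩⟩, hx⟩

end IsStationaryIn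

/-- Lemma 4.1: if `χ⁺⁺ < κ` and `E^κ_{≥χ}` admits a nonreflecting stationary subset, then
there are an infinite regular `ν` with `χ ≤ ν`, `ν < κ`, `ν⁺ < κ`, and a nonreflecting
stationary `Γ ⊆ E^κ_{≥χ} ∩ E^κ_{≠ν⁺}`. -/
theorem stmt16 (κ χ : Cardinal) (hreg : κ.IsRegular) (hunc : ℵ₀ < κ)
    (hχ : χ.IsRegular) (hχκ : Order.succ (Order.succ χ) < κ)
    (hS : ∃ S ⊆ {α : Ordinal | α < κ.ord ∧ χ ≤ α.cof},
      IsStationaryIn S κ.ord ∧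
      ∀ α < κ.ord, ℵ₀ < α.cof → ¬ IsStationaryIn (S ∩ Set.Iio α) α) :
    ∃ ν : Cardinal, ν.IsRegular ∧ χ ≤ ν ∧ ν < κ ∧ Order.succ ν < κ ∧
      ∃ Γ ⊆ {α : Ordinal | α < κ.ord ∧ χ ≤ α.cof ∧ α.cof ≠ Order.succ ν},
        IsStationaryIn Γ κ.ord ∧
        ∀ α < κ.ord, ℵ₀ < α.cof → ¬ IsStationaryIn (Γ ∩ Set.Iio α) α := by
  obtain ⟨S, hSsub, hSstat, hSnr⟩ := hS
  have hnr : ∀ Γ ⊆ S, ∀ α < κ.ord, ℵ₀ < α.cof → ¬ IsStationaryIn (Γ ∩ Set.Iio α) α :=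
    fun Γ hΓ α hα hcf hΓα => hSnr α hα hcf (hΓα.mono (inter_subset_inter_left _ hΓ))
  have hχ₁ : χ < Order.succ χ := Order.lt_succ χ
  have hχ₂ : Order.succ χ < Order.succ (Order.succ χ) := Order.lt_succ _
  rcases hSstat.sep_or_sep_not (hreg.cof_ord.symm ▸ hunc) (fun α => α.cof = Order.succ χ)
    with hstat | hstat
  · refine ⟨Order.succ χ, isRegular_succ hχ.aleph0_le, hχ₁.le, hχ₂.trans hχκ, hχκ,
      _, fun x hx => ?_, hstat, hnr _ (sep_subset _ _)⟩
    exact ⟨(hSsub hx.1).1, (hSsub hx.1).2, hx.2 ▸ hχ₂.ne⟩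
  · refine ⟨χ, hχ, le_rfl, hχ₁.trans (hχ₂.trans hχκ), hχ₂.trans hχκ,
      _, fun x hx => ?_, hstat, hnr _ (sep_subset _ _)⟩
    exact ⟨(hSsub hx.1).1, (hSsub hx.1).2, hx.2⟩

end Paper
end
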